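/- The function k(x, x') = |θ_x|^{1/4} |θ_{x'}|^{1/4} |θ_x + θ_{x'}|^{-1/2} exp(-½ (x - x')ᵀ (θ_x + θ_{x'})^{-1} (x - x')), where θ_x is any assignment of positive-definite diagonal matrices to input points x, is a positive semidefinite kernel. -/

import Mathlib

/-!
Write `g_{a,s}(u) = (2πa)^{-1/4} exp(-(u-s)²/(2a))` for a one-dimensional Gaussian bump. Completing
the square gives `∫ g_{a,s} g_{b,t} = a^{1/4} b^{1/4} (a+b)^{-1/2} exp(-(s-t)²/(2(a+b)))`, so the
one-dimensional kernel is a Gram matrix in `L²(ℝ)` and hence positive semidefinite. For diagonal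
`θ` the `d`-dimensional kernel is the entrywise product over the coordinates of one-dimensional
kernels, which is positive semidefinite by the Schur product theorem.
-/

open MeasureTheory Matrix Real
open scoped ComplexOrder

namespace Matrix

theorem posSemidef_of_integral_mul {α ι : Type*} [MeasurableSpace α] {μ : Measure α} [Finite ι]
    (g : ι → α → ℝ) (hg : ∀ i, MemLp (g i) 2 μ) :
    (of fun i j => ∫ u, g i u * g j u ∂μ).PosSemidef := by
  suffices h : (of fun i j => ∫ u, g i u * g j u ∂μ) = gram ℝ fun i => (hg i).toLp (g i) by
    rw [h]
    exact posSemidef_gram ℝ _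
  ext i j
  rw [gram_apply, L2.inner_def]
  refine integral_congr_ae ?_
  filter_upwards [(hg i).coeFn_toLp, (hg j).coeFn_toLp] with u hi hj
  simp [hi, hj, mul_comm]

theorem posSemidef_entrywise_finsetProd {𝕜 ι κ : Type*} [RCLike 𝕜] [Finite ι] (s : Finset κ)
    (A : κ → Matrix ι ι 𝕜) (hA : ∀ k ∈ s, (A k).PosSemidef) :
    (of fun i j => ∏ k ∈ s, A k i j).PosSemidef := by
  classical
  induction s using Finset.induction_on with
  | empty => simpa [vecMulVec] using posSemidef_vecMulVec_self_star (fun _ : ι => (1 : 𝕜))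
  | insert k s hk ih =>
    simp only [Finset.prod_insert hk]
    exact (hA k (s.mem_insert_self k)).hadamard
      (ih fun l hl => hA l (Finset.mem_insert_of_mem hl))

end Matrix

noncomputable def gaussBump (a s u : ℝ) : ℝ :=
  (2 * π * a) ^ (-(1 : ℝ) / 4) * exp (-(u - s) ^ 2 / (2 * a))

noncomputable def nonstationaryGaussKernel (a b s t : ℝ) : ℝ :=
  a ^ ((1 : ℝ) / 4) * b ^ ((1 : ℝ) / 4) * (a + b) ^ (-(1 : ℝ) / 2) *
    exp (-(s - t) ^ 2 / (2 * (a + b)))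

theorem Real.rpow_half_eq_sq_rpow_quarter {x : ℝ} (hx : 0 ≤ x) :
    x ^ ((1 : ℝ) / 2) = (x ^ ((1 : ℝ) / 4)) ^ 2 := by
  rw [← rpow_natCast, ← rpow_mul hx]
  norm_num

section GaussBump

variable {a b : ℝ}

theorem gaussBump_normalization (ha : 0 < a) (hb : 0 < b) :
    (2 * π * a) ^ (-(1 : ℝ) / 4) * (2 * π * b) ^ (-(1 : ℝ) / 4) *
        √(π / ((a + b) / (2 * a * b))) =
      a ^ ((1 : ℝ) / 4) * b ^ ((1 : ℝ) / 4) * (a + b) ^ (-(1 : ℝ) / 2) := by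
  have hπ : 0 ≤ 2 * π := by positivity
  have hab : 0 ≤ a + b := by positivity
  rw [show π / ((a + b) / (2 * a * b)) = 2 * π * a * b / (a + b) by field_simp,
    sqrt_eq_rpow, div_rpow (by positivity) hab, mul_rpow (x := 2 * π * a) (by positivity) hb.le]
  -- Everything is now a rational function of the fourth roots of `2π`, `a`, `b` and of `√(a+b)`.
  simp only [mul_rpow hπ ha.le, mul_rpow hπ hb.le, neg_div, rpow_neg hab, rpow_neg hπ,
    rpow_neg ha.le, rpow_neg hb.le, rpow_half_eq_sq_rpow_quarter hπ,
    rpow_half_eq_sq_rpow_quarter ha.le, rpow_half_eq_sq_rpow_quarter hb.le]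
  have : 0 < (2 * π) ^ ((1 : ℝ) / 4) := by positivity
  have : 0 < a ^ ((1 : ℝ) / 4) := by positivity
  have : 0 < b ^ ((1 : ℝ) / 4) := by positivity
  field_simp

variable (s t : ℝ)

theorem gaussBump_mul_gaussBump (ha : 0 < a) (hb : 0 < b) (u : ℝ) :
    gaussBump a s u * gaussBump b t u =
      (2 * π * a) ^ (-(1 : ℝ) / 4) * (2 * π * b) ^ (-(1 : ℝ) / 4) *
        exp (-(s - t) ^ 2 / (2 * (a + b))) *
        exp (-((a + b) / (2 * a * b)) * (u - (b * s + a * t) / (a + b)) ^ 2) := by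
  have hab : a + b ≠ 0 := (add_pos ha hb).ne'
  rw [gaussBump, gaussBump, mul_mul_mul_comm, mul_assoc _ (exp _) (exp _), ← exp_add, ← exp_add]
  congr 2
  field_simp
  ring

theorem integrable_gaussBump_mul (ha : 0 < a) (hb : 0 < b) :
    Integrable fun u => gaussBump a s u * gaussBump b t u := by
  simp_rw [gaussBump_mul_gaussBump s t ha hb]
  exact ((integrable_exp_neg_mul_sq (by positivity)).comp_sub_right _).const_mul _

theorem integral_gaussBump_mul (ha : 0 < a) (hb : 0 < b) :
    ∫ u, gaussBump a s u * gaussBump b t u = nonstationaryGaussKernel a b s t := by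
  simp_rw [gaussBump_mul_gaussBump s t ha hb]
  rw [integral_const_mul,
    integral_sub_right_eq_self (fun v => exp (-((a + b) / (2 * a * b)) * v ^ 2)),
    integral_gaussian, mul_right_comm, gaussBump_normalization ha hb, nonstationaryGaussKernel]

theorem memLp_gaussBump (ha : 0 < a) : MemLp (gaussBump a s) 2 := by
  refine (memLp_two_iff_integrable_sq (by unfold gaussBump; fun_prop)).2 ?_
  simpa only [sq] using integrable_gaussBump_mul s s ha ha

end GaussBump

theorem posSemidef_nonstationaryGaussKernel {ι : Type*} [Finite ι] {a : ι → ℝ}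
    (ha : ∀ i, 0 < a i) (s : ι → ℝ) :
    (of fun i j => nonstationaryGaussKernel (a i) (a j) (s i) (s j)).PosSemidef := by
  convert posSemidef_of_integral_mul (fun i => gaussBump (a i) (s i))
    (fun i => memLp_gaussBump (s i) (ha i)) using 1
  ext i j
  exact (integral_gaussBump_mul _ _ (ha i) (ha j)).symm

theorem Matrix.IsDiag.det_rpow_mul_exp_eq_prod {κ : Type*} [Fintype κ] [DecidableEq κ]
    {A B : Matrix κ κ ℝ} (hAd : A.IsDiag) (hA : A.PosDef) (hBd : B.IsDiag) (hB : B.PosDef)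
    (s t : κ → ℝ) :
    A.det ^ ((1 : ℝ) / 4) * B.det ^ ((1 : ℝ) / 4) * (A + B).det ^ (-(1 : ℝ) / 2) *
        exp (-(1 / 2) * ((s - t) ⬝ᵥ (A + B)⁻¹ *ᵥ (s - t))) =
      ∏ l, nonstationaryGaussKernel (A l l) (B l l) (s l) (t l) := by
  have ha l : 0 < A l l := hA.diag_pos
  have hb l : 0 < B l l := hB.diag_pos
  have hab l : 0 < A l l + B l l := add_pos (ha l) (hb l)
  have hinv : (diagonal fun l => A l l + B l l)⁻¹ = diagonal fun l => (A l l + B l l)⁻¹ :=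
    inv_eq_left_inv (by simp [inv_mul_cancel₀ (hab _).ne'])
  rw [← hAd.diagonal_diag, ← hBd.diagonal_diag]
  simp only [diag_apply, diagonal_apply_eq, diagonal_add, det_diagonal, hinv, mulVec_diagonal,
    dotProduct, Pi.sub_apply, Finset.mul_sum, exp_sum, ← finsetProd_rpow _ _ (fun l _ => (ha l).le),
    ← finsetProd_rpow _ _ (fun l _ => (hb l).le), ← finsetProd_rpow _ _ (fun l _ => (hab l).le),
    ← Finset.prod_mul_distrib, nonstationaryGaussKernel]
  refine Finset.prod_congr rfl fun l _ => ?_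
  congr 2
  field_simp

/-- the non-stationary Gaussian covariance
`k(x,x') = |θ_x|^{1/4} |θ_{x'}|^{1/4} |θ_x + θ_{x'}|^{-1/2}
           exp(-½ (x-x')ᵀ (θ_x + θ_{x'})⁻¹ (x-x'))`
is a positive semidefinite kernel. -/
theorem nonstationary_gauss_kernel_posSemidef (d n : ℕ)
    (θ : (Fin d → ℝ) → Matrix (Fin d) (Fin d) ℝ)
    (hθpd : ∀ x, (θ x).PosDef) (hθdiag : ∀ x, (θ x).IsDiag)
    (x : Fin n → (Fin d → ℝ)) :
    Matrix.PosSemidef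
      (Matrix.of fun i j : Fin n =>
        (θ (x i)).det ^ ((1 : ℝ) / 4) * (θ (x j)).det ^ ((1 : ℝ) / 4) *
          (θ (x i) + θ (x j)).det ^ (-(1 : ℝ) / 2) *
          Real.exp (-(1 / 2) *
            ((x i - x j) ⬝ᵥ (θ (x i) + θ (x j))⁻¹ *ᵥ (x i - x j)))) := by
  have h := posSemidef_entrywise_finsetProd Finset.univ
    (fun l => of fun i j => nonstationaryGaussKernel (θ (x i) l l) (θ (x j) l l) (x i l) (x j l))
    (fun l _ => posSemidef_nonstationaryGaussKernel (fun i => (hθpd (x i)).diag_pos) _)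
  refine (congrArg PosSemidef (Matrix.ext fun i j => ?_)).mpr h
  exact (hθdiag _).det_rpow_mul_exp_eq_prod (hθpd _) (hθdiag _) (hθpd _) (x i) (x j)
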